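/- Each Gaudin Hamiltonian is a homomorphism of 𝔤-modules: with 𝔤, B, {x_a}, {x^a} as in the context, for any 𝔤-modules M₁, …, M_ℓ (ℓ ≥ 2) and distinct complex numbers z₁, …, z_ℓ, every H^i commutes with the diagonal action of 𝔤 on M₁ ⊗ ⋯ ⊗ M_ℓ, i.e. H^i(x·u) = x·H^i(u) for all x ∈ 𝔤 and u ∈ M₁ ⊗ ⋯ ⊗ M_ℓ, where x acts diagonally: x·(m₁⊗⋯⊗m_ℓ) = Σ_{i=1}^ℓ m₁⊗⋯⊗(x·m_i)⊗⋯⊗m_ℓ. -/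

import Mathlib

open scoped TensorProduct

/-- The operator `x^{(i)}` on `M₁ ⊗ ⋯ ⊗ M_ℓ` acting as `x` on the `i`-th tensor factor
and as the identity on the others. -/
noncomputable def factorAction {L : Type*} [LieRing L] [LieAlgebra ℂ L]
    {ℓ : ℕ} (M : Fin ℓ → Type*) [∀ j, AddCommGroup (M j)] [∀ j, Module ℂ (M j)]
    [∀ j, LieRingModule L (M j)] [∀ j, LieModule ℂ L (M j)]
    (i : Fin ℓ) (x : L) :
    (⨂[ℂ] j, M j) →ₗ[ℂ] ⨂[ℂ] j, M j :=
  PiTensorProduct.map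
    (Function.update (fun j => (LinearMap.id : M j →ₗ[ℂ] M j)) i
      (LieModule.toEnd ℂ L (M i) x))

/-- `Ω^{(ij)} = Σ_a x_a^{(i)} ∘ (x^a)^{(j)}` on `M₁ ⊗ ⋯ ⊗ M_ℓ`, for a family
`{x_a}` with dual family `{x^a}`. -/
noncomputable def gaudinOmega {L : Type*} [LieRing L] [LieAlgebra ℂ L]
    {ι : Type*} [Fintype ι] (x x' : ι → L)
    {ℓ : ℕ} (M : Fin ℓ → Type*) [∀ j, AddCommGroup (M j)] [∀ j, Module ℂ (M j)]
    [∀ j, LieRingModule L (M j)] [∀ j, LieModule ℂ L (M j)]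
    (i j : Fin ℓ) :
    (⨂[ℂ] k, M k) →ₗ[ℂ] ⨂[ℂ] k, M k :=
  ∑ a : ι, factorAction M i (x a) ∘ₗ factorAction M j (x' a)

/-- The Gaudin Hamiltonian `H^i = Σ_{j ≠ i} Ω^{(ij)}/(z_i − z_j)` on `M₁ ⊗ ⋯ ⊗ M_ℓ`. -/
noncomputable def gaudinH {L : Type*} [LieRing L] [LieAlgebra ℂ L]
    {ι : Type*} [Fintype ι] (x x' : ι → L)
    {ℓ : ℕ} (M : Fin ℓ → Type*) [∀ j, AddCommGroup (M j)] [∀ j, Module ℂ (M j)]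
    [∀ j, LieRingModule L (M j)] [∀ j, LieModule ℂ L (M j)]
    (z : Fin ℓ → ℂ) (i : Fin ℓ) :
    (⨂[ℂ] k, M k) →ₗ[ℂ] ⨂[ℂ] k, M k :=
  ∑ j ∈ Finset.univ.filter (fun j => j ≠ i),
    (z i - z j)⁻¹ • gaudinOmega x x' M i j

/-- The diagonal action of `x ∈ L` on `M₁ ⊗ ⋯ ⊗ M_ℓ`:
`x·(m₁⊗⋯⊗m_ℓ) = Σ_i m₁⊗⋯⊗(x·m_i)⊗⋯⊗m_ℓ`. -/
noncomputable def diagAction {L : Type*} [LieRing L] [LieAlgebra ℂ L]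
    {ℓ : ℕ} (M : Fin ℓ → Type*) [∀ j, AddCommGroup (M j)] [∀ j, Module ℂ (M j)]
    [∀ j, LieRingModule L (M j)] [∀ j, LieModule ℂ L (M j)]
    (x : L) :
    (⨂[ℂ] k, M k) →ₗ[ℂ] ⨂[ℂ] k, M k :=
  ∑ i : Fin ℓ, factorAction M i x


/-!
The Casimir element `∑ₐ xₐ ⊗ xᵃ` is `ad`-invariant: expanding `⁅y, xₐ⁆` in the basis `{x_b}` and
`⁅y, xᵃ⁆` in the dual family `{xᵇ}` (itself a basis, by counting dimensions), invariance of `B`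
makes the two coefficient matrices negatives of each other. Commutation with the diagonal action
of `y` is a derivation of `End (M₁ ⊗ ⋯ ⊗ M_ℓ)` sending `u^{(i)}` to `⁅y, u⁆^{(i)}`, so it sends
`Ω^{(ij)}` to the image of that invariance identity under `u ⊗ v ↦ u^{(i)} v^{(j)}`, which is zero.
-/

section Biorthogonal
variable {K V ι : Type*} [Fintype ι] [DecidableEq ι]

theorem Module.Basis.sum_apply_smul_of_biorthogonal [CommSemiring K] [AddCommMonoid V]
    [Module K V] (b : Module.Basis ι K V) (f : ι → V →ₗ[K] K)
    (hf : ∀ a c, f a (b c) = if a = c then 1 else 0) (v : V) :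
    ∑ a, f a v • b a = v := by
  have hcoord : ∀ a, f a = b.coord a := fun a => b.ext fun c => by
    simp [hf, Finsupp.single_apply, eq_comm]
  simp [hcoord, b.sum_repr v]

theorem linearIndependent_of_biorthogonal [CommRing K] [AddCommGroup V] [Module K V]
    (f : ι → V →ₗ[K] K) (e : ι → V) (hf : ∀ a c, f a (e c) = if a = c then 1 else 0) :
    LinearIndependent K e := by
  have hcomp : ⇑(LinearMap.pi f) ∘ e = Pi.basisFun K ι := by
    ext c a
    simp [hf, Pi.single_apply]
  exact .of_comp _ (hcomp ▸ (Pi.basisFun K ι).linearIndependent)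

end Biorthogonal

section DualPair
variable {K V ι : Type*} [Field K] [AddCommGroup V] [Module K V] [Fintype ι] [DecidableEq ι]
  (x : Module.Basis ι K V) (B : V →ₗ[K] V →ₗ[K] K) (x' : ι → V)

theorem sum_apply_dual_smul (hdual : ∀ a b, B (x a) (x' b) = if a = b then 1 else 0) (v : V) :
    ∑ a, B v (x' a) • x a = v :=
  x.sum_apply_smul_of_biorthogonal (fun a => B.flip (x' a)) (by simp [hdual, eq_comm]) v

theorem sum_apply_basis_smul_dual (hdual : ∀ a b, B (x a) (x' b) = if a = b then 1 else 0)
    (v : V) : ∑ a, B (x a) v • x' a = v := by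
  have := Module.Finite.of_basis x
  let b' := basisOfLinearIndependentOfCardEqFinrank' x'
    (linearIndependent_of_biorthogonal (fun a => B (x a)) x' hdual)
    (Module.finrank_eq_card_basis x).symm
  simpa [b'] using
    b'.sum_apply_smul_of_biorthogonal (fun a => B (x a)) (by simpa [b'] using hdual) v

end DualPair

theorem sum_apply_lie_add_apply_lie_eq_zero {K L N ι : Type*} [Field K] [LieRing L]
    [LieAlgebra K L] [AddCommGroup N] [Module K N] [Fintype ι] [DecidableEq ι]
    (x : Module.Basis ι K L) (B : L →ₗ[K] L →ₗ[K] K)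
    (hB : ∀ u v w, B ⁅u, v⁆ w = B u ⁅v, w⁆) (x' : ι → L)
    (hdual : ∀ a b, B (x a) (x' b) = if a = b then 1 else 0) (φ : L →ₗ[K] L →ₗ[K] N) (y : L) :
    ∑ a, (φ ⁅y, x a⁆ (x' a) + φ (x a) ⁅y, x' a⁆) = 0 := by
  have h₁ : ∀ a, φ ⁅y, x a⁆ (x' a) = ∑ b, B ⁅y, x a⁆ (x' b) • φ (x b) (x' a) := fun a => by
    conv_lhs => rw [← sum_apply_dual_smul x B x' hdual ⁅y, x a⁆]
    simp
  have h₂ : ∀ a, φ (x a) ⁅y, x' a⁆ = -∑ b, B ⁅y, x b⁆ (x' a) • φ (x a) (x' b) := fun a => by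
    have hskew : ∀ b, B (x b) ⁅y, x' a⁆ = -B ⁅y, x b⁆ (x' a) := fun b => by
      rw [← hB, ← lie_skew, map_neg, LinearMap.neg_apply]
    conv_lhs => rw [← sum_apply_basis_smul_dual x B x' hdual ⁅y, x' a⁆]
    simp [hskew]
  rw [Finset.sum_add_distrib]
  simp only [h₁, h₂, Finset.sum_neg_distrib]
  rw [Finset.sum_comm, add_neg_cancel]

theorem Ring.lie_mul {A : Type*} [Ring A] (a b c : A) : ⁅a, b * c⁆ = ⁅a, b⁆ * c + b * ⁅a, c⁆ := by
  simp only [Ring.lie_def]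
  noncomm_ring

attribute [local instance] LieRing.ofAssociativeRing

section FactorAction
variable {L : Type*} [LieRing L] [LieAlgebra ℂ L] {ℓ : ℕ} (M : Fin ℓ → Type*)
  [∀ j, AddCommGroup (M j)] [∀ j, Module ℂ (M j)] [∀ j, LieRingModule L (M j)]
  [∀ j, LieModule ℂ L (M j)]

theorem factorAction_tprod (i : Fin ℓ) (u : L) (m : ∀ j, M j) :
    factorAction M i u (PiTensorProduct.tprod ℂ m)
      = PiTensorProduct.tprod ℂ (Function.update m i ⁅u, m i⁆) := by
  rw [factorAction, PiTensorProduct.map_tprod]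
  congr 1
  ext j
  rcases eq_or_ne j i with rfl | h
  · simp
  · simp [h]

noncomputable def factorActionHom (i : Fin ℓ) : L →ₗ⁅ℂ⁆ Module.End ℂ (⨂[ℂ] j, M j) where
  toFun := factorAction M i
  map_add' u v := by
    ext m
    simp [factorAction_tprod, add_lie, MultilinearMap.map_update_add]
  map_smul' c u := by
    ext m
    simp [factorAction_tprod, smul_lie, MultilinearMap.map_update_smul]
  map_lie' {u v} := by
    ext m
    simp [factorAction_tprod, Ring.lie_def, ← MultilinearMap.map_update_sub, lie_lie]

theorem factorAction_commute {i j : Fin ℓ} (hij : i ≠ j) (u v : L) :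
    Commute (factorAction M i u) (factorAction M j v) := by
  ext m
  simp [factorAction_tprod, Function.update_of_ne hij, Function.update_of_ne hij.symm,
    Function.update_comm hij]

theorem lie_diagAction_factorAction (y u : L) (i : Fin ℓ) :
    ⁅diagAction M y, factorAction M i u⁆ = factorAction M i ⁅y, u⁆ := by
  rw [diagAction, sum_lie, Finset.sum_eq_single i]
  · exact ((factorActionHom M i).map_lie y u).symm
  · exact fun k _ hki => commute_iff_lie_eq.mp (factorAction_commute M hki y u)
  · simp

end FactorAction

theorem lie_diagAction_gaudinOmega {L : Type*} [LieRing L] [LieAlgebra ℂ L]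
    {ι : Type*} [Fintype ι] [DecidableEq ι] (x : Module.Basis ι ℂ L)
    (B : L →ₗ[ℂ] L →ₗ[ℂ] ℂ) (hB : ∀ u v w, B ⁅u, v⁆ w = B u ⁅v, w⁆) (x' : ι → L)
    (hdual : ∀ a b, B (x a) (x' b) = if a = b then 1 else 0)
    {ℓ : ℕ} (M : Fin ℓ → Type*) [∀ j, AddCommGroup (M j)] [∀ j, Module ℂ (M j)]
    [∀ j, LieRingModule L (M j)] [∀ j, LieModule ℂ L (M j)]
    (i j : Fin ℓ) (y : L) :
    ⁅diagAction M y, gaudinOmega (⇑x) x' M i j⁆ = 0 := by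
  have := sum_apply_lie_add_apply_lie_eq_zero x B hB x' hdual
    ((LinearMap.mul ℂ (Module.End ℂ (⨂[ℂ] k, M k))).compl₁₂
      (factorActionHom M i).toLinearMap (factorActionHom M j).toLinearMap) y
  simp only [gaudinOmega, ← Module.End.mul_eq_comp, lie_sum, Ring.lie_mul,
    lie_diagAction_factorAction]
  simp only [LinearMap.compl₁₂_apply, LinearMap.mul_apply', LieHom.coe_toLinearMap] at this
  exact this

theorem gaudin_hamiltonian_equivariant_general
    {L : Type*} [LieRing L] [LieAlgebra ℂ L]
    {ι : Type*} [Fintype ι] [DecidableEq ι] (x : Module.Basis ι ℂ L)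
    (B : L →ₗ[ℂ] L →ₗ[ℂ] ℂ)
    (hB_inv : ∀ u v w : L, B ⁅u, v⁆ w = B u ⁅v, w⁆)
    (x' : ι → L)
    (hdual : ∀ a b : ι, B (x a) (x' b) = if a = b then (1 : ℂ) else 0)
    {ℓ : ℕ}
    (M : Fin ℓ → Type*) [∀ j, AddCommGroup (M j)] [∀ j, Module ℂ (M j)]
    [∀ j, LieRingModule L (M j)] [∀ j, LieModule ℂ L (M j)]
    (z : Fin ℓ → ℂ)
    (i : Fin ℓ) (y : L) :
    gaudinH (⇑x) x' M z i ∘ₗ diagAction M y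
      = diagAction M y ∘ₗ gaudinH (⇑x) x' M z i := by
  have hΩ : ∀ j, Commute (diagAction M y) (gaudinOmega (⇑x) x' M i j) := fun j =>
    commute_iff_lie_eq.mpr (lie_diagAction_gaudinOmega x B hB_inv x' hdual M i j y)
  have hH : Commute (diagAction M y) (gaudinH (⇑x) x' M z i) :=
    .sum_right _ _ _ fun j _ => (hΩ j).smul_right _
  exact hH.eq.symm

/-- Each Gaudin Hamiltonian is a homomorphism of `L`-modules: for a finite-dimensional
complex Lie algebra with nondegenerate invariant symmetric bilinear form `B`, basis
`{x_a}` and `B`-dual basis `{x^a}`, modules `M₁, …, M_ℓ` (`ℓ ≥ 2`) and distinct complex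
numbers `z₁, …, z_ℓ`, every `H^i` commutes with the diagonal action of `L`. -/
theorem gaudin_hamiltonian_equivariant
    {L : Type*} [LieRing L] [LieAlgebra ℂ L] [FiniteDimensional ℂ L]
    {ι : Type*} [Fintype ι] [DecidableEq ι] (x : Module.Basis ι ℂ L)
    (B : L →ₗ[ℂ] L →ₗ[ℂ] ℂ)
    (hB_nondeg : ∀ u : L, (∀ v : L, B u v = 0) → u = 0)
    (hB_symm : ∀ u v : L, B u v = B v u)
    (hB_inv : ∀ u v w : L, B ⁅u, v⁆ w = B u ⁅v, w⁆)
    (x' : ι → L)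
    (hdual : ∀ a b : ι, B (x a) (x' b) = if a = b then (1 : ℂ) else 0)
    {ℓ : ℕ} (hℓ : 2 ≤ ℓ)
    (M : Fin ℓ → Type*) [∀ j, AddCommGroup (M j)] [∀ j, Module ℂ (M j)]
    [∀ j, LieRingModule L (M j)] [∀ j, LieModule ℂ L (M j)]
    (z : Fin ℓ → ℂ) (hz : Function.Injective z)
    (i : Fin ℓ) (y : L) :
    gaudinH (⇑x) x' M z i ∘ₗ diagAction M y
      = diagAction M y ∘ₗ gaudinH (⇑x) x' M z i :=
  gaudin_hamiltonian_equivariant_general x B hB_inv x' hdual M z i y
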